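/- arXiv:2311.11490 — 2 statements merged into one kernel-verified Lean document; each statement's English description precedes it below -/
import Mathlib

section
/- Let G be a finite group of order divisible by a prime p, let P be a Sylow p-subgroup of G, and let a be a positive integer with p^a ≤ exp(Z(P)). Then the number of conjugacy classes of G consisting of elements g whose order has p-part exactly p^a is at least p^(a-1). -/
/-
Take `z ∈ Z(P)` of order `p ^ a`. The powers `z ^ u` with `u ≡ 1 (mod p)` a unit mod `p ^ a`
(there are `p ^ (a - 1)` of them) all have order `p ^ a`, and they lie in pairwise
distinct classes. Indeed, by Burnside's fusion argument a conjugation `z ↦ z ^ k` inside `G` may be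
realised by some `n ∈ N_G(P)`; a `p'`-power `n ^ t` lies in `P` and so centralises `z`, whence
`k ^ t ≡ 1 (mod p ^ a)`. Since `k ≡ 1 (mod p)` lies in the `p`-group `ker ((ℤ/p^a)ˣ → (ℤ/p)ˣ)`
and `t` is prime to `p`, this forces `k ≡ 1 (mod p ^ a)`.
-/

open Subgroup

namespace ZMod

variable {p a : ℕ} [Fact p.Prime]

theorem card_ker_unitsMap_prime_pow (ha : a ≠ 0) :
    Nat.card (unitsMap (dvd_pow_self p ha)).ker = p ^ (a - 1) := by
  have hp : p.Prime := Fact.out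
  have hcard := card_eq_card_quotient_mul_card_subgroup (unitsMap (dvd_pow_self p ha)).ker
  rw [Nat.card_congr (QuotientGroup.quotientKerEquivOfSurjective _
      (unitsMap_surjective (dvd_pow_self p ha))).toEquiv, Nat.card_eq_fintype_card,
    Nat.card_eq_fintype_card, card_units_eq_totient, card_units_eq_totient,
    Nat.totient_prime_pow hp (Nat.pos_of_ne_zero ha), Nat.totient_prime hp, mul_comm] at hcard
  exact (Nat.eq_of_mul_eq_mul_left (Nat.sub_pos_of_lt hp.one_lt) hcard).symm

theorem eq_one_of_mem_ker_unitsMap_of_pow_eq_one {t : ℕ} (ha : a ≠ 0) (ht : p.Coprime t)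
    {u : (ZMod (p ^ a))ˣ} (hu : u ∈ (unitsMap (dvd_pow_self p ha)).ker) (hut : u ^ t = 1) :
    u = 1 := by
  have hpg : IsPGroup p _ := IsPGroup.of_card (card_ker_unitsMap_prime_pow ha)
  have hdvd : orderOf (⟨u, hu⟩ : (unitsMap (dvd_pow_self p ha)).ker) ∣ t :=
    orderOf_dvd_of_pow_eq_one (Subtype.ext hut)
  simpa using (hpg.orderOf_coprime ht _).eq_one_of_dvd hdvd

end ZMod

section PowVal

variable {G : Type*} [Group G] {z : G} {n : ℕ}

theorem pow_eq_pow_iff_natCast_eq (hz : orderOf z = n) {m m' : ℕ} :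
    z ^ m = z ^ m' ↔ (m : ZMod n) = m' := by
  rw [pow_eq_pow_iff_modEq, ZMod.natCast_eq_natCast_iff, hz]

theorem orderOf_pow_val_unit (hz : orderOf z = n) (u : (ZMod n)ˣ) :
    orderOf (z ^ (u : ZMod n).val) = n := by
  rw [Nat.Coprime.orderOf_pow (hz ▸ (ZMod.val_coe_unit_coprime u).symm), hz]

theorem IsConj.self_pow_val_mul_inv [NeZero n] (hz : orderOf z = n) {u v : (ZMod n)ˣ}
    (h : IsConj (z ^ (u : ZMod n).val) (z ^ (v : ZMod n).val)) :
    IsConj z (z ^ ((v * u⁻¹ : (ZMod n)ˣ) : ZMod n).val) := by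
  have h' := h.pow ((u⁻¹ : (ZMod n)ˣ) : ZMod n).val
  rw [← pow_mul, ← pow_mul] at h'
  convert h' using 1
  · conv_lhs => rw [← pow_one z]
    rw [pow_eq_pow_iff_natCast_eq hz]
    push_cast
    simp
  · rw [pow_eq_pow_iff_natCast_eq hz]
    push_cast
    simp

theorem pow_pow_eq_of_conj_eq_pow {x : G} {k : ℕ} (h : x * z * x⁻¹ = z ^ k) (t : ℕ) :
    x ^ t * z * (x ^ t)⁻¹ = z ^ k ^ t := by
  induction t with
  | zero => simp
  | succ t ih =>
    rw [show x ^ (t + 1) * z * (x ^ (t + 1))⁻¹ = x * (x ^ t * z * (x ^ t)⁻¹) * x⁻¹ by group, ih,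
      ← conj_pow, h, ← pow_mul, pow_succ']

end PowVal

open scoped IsMulCommutative in
theorem exists_orderOf_eq_of_dvd_exponent {G : Type*} [Group G] [IsMulCommutative G] [Finite G]
    {d : ℕ} (hd : d ∣ Monoid.exponent G) : ∃ g : G, orderOf g = d := by
  obtain ⟨g, hg⟩ := Monoid.exists_orderOf_eq_exponent (Monoid.ExponentExists.of_finite (G := G))
  rw [← hg] at hd
  exact ⟨g ^ (orderOf g / d), orderOf_pow_orderOf_div (orderOf_pos g).ne' hd⟩

namespace Sylow

variable {p : ℕ} [Fact p.Prime] {G : Type*} [Group G] [Finite G]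

theorem exists_coprime_pow_mem_of_mem_normalizer (P : Sylow p G) {g : G}
    (hg : g ∈ normalizer (P : Set G)) : ∃ t, p.Coprime t ∧ g ^ t ∈ P := by
  have hg0 : orderOf g ≠ 0 := (orderOf_pos g).ne'
  set t := orderOf g / p ^ (orderOf g).factorization p
  refine ⟨t, Nat.coprime_ordCompl Fact.out hg0, ?_⟩
  have hpg : IsPGroup p (zpowers (g ^ t)) :=
    IsPGroup.of_card (by rw [Nat.card_zpowers, orderOf_pow_of_dvd (Nat.ordCompl_pos p hg0).ne'
      (Nat.ordCompl_dvd _ _), Nat.div_div_self (Nat.ordProj_dvd _ _) hg0])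
  have hmem : g ^ t ∈ zpowers (g ^ t) ⊓ normalizer (P : Set G) := ⟨mem_zpowers _, pow_mem hg _⟩
  rw [hpg.inf_normalizer_sylow P] at hmem
  exact hmem.2

theorem exists_coprime_pow_pow_eq_self_of_isConj (P : Sylow p G) {z : G}
    (hz : z ∈ centralizer (P : Set G)) {k : ℕ} (h : IsConj z (z ^ k)) :
    ∃ t, p.Coprime t ∧ z ^ k ^ t = z := by
  obtain ⟨c, hc⟩ := isConj_iff.mp h
  obtain ⟨n, hn, hcn⟩ := P.conj_eq_normalizer_conj_of_mem_centralizer z c⁻¹ hz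
    (by simpa [hc] using pow_mem hz k)
  obtain ⟨t, ht, hnt⟩ := P.exists_coprime_pow_mem_of_mem_normalizer (inv_mem hn)
  refine ⟨t, ht, ?_⟩
  have hconj : n⁻¹ * z * n⁻¹⁻¹ = z ^ k := by rw [inv_inv, ← hcn, inv_inv, hc]
  rw [← pow_pow_eq_of_conj_eq_pow hconj, mem_centralizer_iff.mp hz _ hnt, mul_inv_cancel_right]

theorem exists_mem_centralizer_orderOf_eq (P : Sylow p G) {a : ℕ}
    (hexp : p ^ a ≤ Monoid.exponent (center P)) :
    ∃ z ∈ centralizer (P : Set G), orderOf z = p ^ a := by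
  have hp : p.Prime := Fact.out
  obtain ⟨b, hb⟩ := (P.2.to_subgroup (center P)).exists_exponent_eq_pow
  rw [hb] at hexp
  obtain ⟨z, hz⟩ := exists_orderOf_eq_of_dvd_exponent
    (hb ▸ pow_dvd_pow p ((Nat.pow_le_pow_iff_right hp.one_lt).mp hexp) : p ^ a ∣ _)
  refine ⟨((z : P) : G), mem_centralizer_iff.mpr fun g hg => ?_, by
    rw [orderOf_coe, orderOf_coe, hz]⟩
  exact congrArg Subtype.val (mem_center_iff.mp z.2 ⟨g, hg⟩)

theorem eq_of_isConj_pow_val (P : Sylow p G) {z : G} (hzP : z ∈ centralizer (P : Set G))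
    {a : ℕ} (ha : a ≠ 0) (hz : orderOf z = p ^ a) {u v : (ZMod (p ^ a))ˣ}
    (hu : u ∈ (ZMod.unitsMap (dvd_pow_self p ha)).ker)
    (hv : v ∈ (ZMod.unitsMap (dvd_pow_self p ha)).ker)
    (h : IsConj (z ^ (u : ZMod (p ^ a)).val) (z ^ (v : ZMod (p ^ a)).val)) : u = v := by
  obtain ⟨t, ht, hzt⟩ :=
    P.exists_coprime_pow_pow_eq_self_of_isConj hzP (h.self_pow_val_mul_inv hz)
  have hpow : (v * u⁻¹) ^ t = 1 := by
    have := (pow_eq_pow_iff_natCast_eq hz).mp (hzt.trans (pow_one z).symm)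
    push_cast at this
    exact Units.ext (by simpa using this)
  exact (mul_inv_eq_one.mp
    (ZMod.eq_one_of_mem_ker_unitsMap_of_pow_eq_one ha ht (mul_mem hv (inv_mem hu)) hpow)).symm

end Sylow

theorem stmt_5_general (p a : ℕ) [Fact p.Prime] (ha : 1 ≤ a)
    (G : Type*) [Group G] [Fintype G]
    (P : Sylow p G)
    (hexp : p ^ a ≤ Monoid.exponent (Subgroup.center ↥(P : Subgroup G))) :
    p ^ (a - 1) ≤ Nat.card {C : ConjClasses G //
      ∃ g : G, ConjClasses.mk g = C ∧ (orderOf g).factorization p = a} := by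
  have ha0 : a ≠ 0 := by omega
  obtain ⟨z, hzP, hz⟩ := P.exists_mem_centralizer_orderOf_eq hexp
  let K := (ZMod.unitsMap (dvd_pow_self p ha0)).ker
  let f : K → {C : ConjClasses G //
      ∃ g : G, ConjClasses.mk g = C ∧ (orderOf g).factorization p = a} := fun u =>
    ⟨ConjClasses.mk (z ^ ((u : (ZMod (p ^ a))ˣ) : ZMod (p ^ a)).val), _, rfl, by
      rw [orderOf_pow_val_unit hz, (Fact.out : p.Prime).factorization_pow,
        Finsupp.single_eq_same]⟩
  have hf : Function.Injective f := fun u v huv => Subtype.ext <|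
    P.eq_of_isConj_pow_val hzP ha0 hz u.2 v.2 <|
      ConjClasses.mk_eq_mk_iff_isConj.mp (congrArg Subtype.val huv)
  calc p ^ (a - 1) = Nat.card K := (ZMod.card_ker_unitsMap_prime_pow ha0).symm
    _ ≤ _ := Nat.card_le_card_of_injective f hf

theorem stmt_5 (p a : ℕ) [Fact p.Prime] (ha : 1 ≤ a)
    (G : Type*) [Group G] [Fintype G] (hdvd : p ∣ Nat.card G)
    (P : Sylow p G)
    (hexp : p ^ a ≤ Monoid.exponent (Subgroup.center ↥(P : Subgroup G))) :
    p ^ (a - 1) ≤ Nat.card {C : ConjClasses G //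
      ∃ g : G, ConjClasses.mk g = C ∧ (orderOf g).factorization p = a} :=
  stmt_5_general p a ha G P hexp
end

section
/- Let p be a prime, H a finite group of order coprime to p acting coprimely and faithfully by automorphisms on a finite abelian p-group P, and G = H ⋉ P. Then the number of conjugacy classes of G satisfies k(G) ≥ (exp(P) - 1)/(p - 1) - 1 + k(H ⋉ Ω_1(P)). -/
/-!
Let `Ω = Ω₁(P) ⋊ H ≤ G = P ⋊ H`. Two elements of `Ω` that are conjugate in `G` are already
conjugate in `Ω`: after conjugating by `H` one is left with a conjugation by some `y ∈ P`, and
since `σ ∈ H` acts coprimely, averaging over `⟨σ⟩` replaces `y` by an element of `Ω₁(P)` with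
the same commutator `y σ(y)⁻¹`. So `k(Ω)` classes of `G` meet `Ω`. Since `P` is abelian, the
classes of `G` meeting `P` are the `H`-orbits on `P`; those of elements of order `p ^ a` with
`a ≥ 2` miss `Ω`, as `|H|` is prime to `p` and so `p²` divides no element order in `Ω`. With
`exp P = p ^ e`, at least `∑_{a=2}^{e} p^(a-1) = (p^e - 1)/(p - 1) - 1` such orbits exist.
-/

open SemidirectProduct

lemma IsConj.orderOf_eq {G : Type*} [Group G] {a b : G} (h : IsConj a b) :
    orderOf a = orderOf b :=
  h.elim fun _ hc => hc.orderOf_eq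

lemma Nat.sum_range_pow_sub_one_eq_sum_Icc (p e : ℕ) :
    ∑ i ∈ Finset.range e, p ^ i - 1 = ∑ a ∈ Finset.Icc 2 e, p ^ (a - 1) := by
  cases e with
  | zero => simp
  | succ m =>
    rw [Finset.sum_range_succ', pow_zero, Nat.add_sub_cancel, ← Finset.Ico_add_one_right_eq_Icc,
      Finset.sum_Ico_eq_sum_range]
    exact Finset.sum_congr (by simp) fun i _ => by congr 1; omega

namespace SemidirectProduct

variable {N G : Type*} [Group N] [Group G] {φ : G →* MulAut N}

instance instFinite [Finite N] [Finite G] : Finite (N ⋊[φ] G) :=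
  Finite.of_equiv _ equivProd.symm

lemma inl_mul_mul_inv_inl (y : N) (g : N ⋊[φ] G) :
    inl y * g * (inl y)⁻¹ = ⟨y * g.left * φ g.right y⁻¹, g.right⟩ := by
  ext <;> simp [mul_assoc]

lemma isConj_inl_iff {N : Type*} [CommGroup N] {φ : G →* MulAut N} {x y : N} :
    IsConj (inl x : N ⋊[φ] G) (inl y) ↔ ∃ k : G, φ k x = y := by
  constructor
  · intro h
    obtain ⟨c, hc⟩ := isConj_iff.mp h
    exact ⟨c.right, by simpa [mul_assoc] using congrArg SemidirectProduct.left hc⟩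
  · rintro ⟨k, rfl⟩
    exact isConj_iff.mpr ⟨inr k, by rw [inl_aut, map_inv]⟩

end SemidirectProduct

section CoprimeAction

variable {A : Type*} [CommGroup A]

lemma MulAut.pow_apply_eq_self_of_apply_eq_self {σ : MulAut A} {w : A} (hw : σ w = w) (i : ℕ) :
    (σ ^ i) w = w := by
  induction i with
  | zero => rfl
  | succ i ih => rw [pow_succ, MulAut.mul_apply, hw, ih]

/- The `n`-th root `r` of the norm `∏ σ^i y` is `σ`-fixed, so `v = y r⁻¹` has the same
commutator with `σ` as `y`; and `v ^ p = 1` because `r ^ p` and `y ^ p` have the same norm. -/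
lemma exists_pow_eq_one_mul_inv_map_eq [Finite A] {σ : MulAut A} {n : ℕ} (hσ : σ ^ n = 1)
    (hn : (Nat.card A).Coprime n) {p : ℕ} {y : A} (hy : σ (y ^ p) = y ^ p) :
    ∃ v : A, v ^ p = 1 ∧ v * (σ v)⁻¹ = y * (σ y)⁻¹ := by
  set N := ∏ i ∈ Finset.range n, (σ ^ i) y
  have hN : σ N = N := by
    have h := Finset.prod_range_succ' (fun i => (σ ^ i) y) n
    rw [Finset.prod_range_succ, hσ, pow_zero] at h
    simpa [N, map_prod, pow_succ'] using (mul_right_cancel h).symm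
  have hNp : N ^ p = (y ^ p) ^ n := by
    simp only [N, ← Finset.prod_pow, ← map_pow, MulAut.pow_apply_eq_self_of_apply_eq_self hy,
      Finset.prod_const, Finset.card_range]
  obtain ⟨r, hr⟩ := (powCoprime hn).surjective N
  rw [powCoprime_apply] at hr
  have hσr : σ r = r := (powCoprime hn).injective <| by
    simp only [powCoprime_apply, ← map_pow, hr, hN]
  have hrp : r ^ p = y ^ p := (powCoprime hn).injective <| by
    rw [powCoprime_apply, powCoprime_apply, ← pow_mul, mul_comm, pow_mul, hr, hNp]
  refine ⟨y * r⁻¹, by rw [mul_pow, inv_pow, hrp, mul_inv_cancel], ?_⟩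
  rw [map_mul, map_inv, hσr]
  group

end CoprimeAction

section OmegaOne

variable {P H : Type*} [CommGroup P] [Group H] (p : ℕ) (φ : H →* MulAut P)

/-- `Ω₁(P) ⋊ H` for `p` prime. -/
def omegaOne : Subgroup (P ⋊[φ] H) where
  carrier := {g | g.left ^ p = 1}
  one_mem' := by simp
  mul_mem' {a b} (ha : a.left ^ p = 1) (hb : b.left ^ p = 1) :=
    show (a * b).left ^ p = 1 by rw [mul_left, mul_pow, ← map_pow, ha, hb, map_one, one_mul]
  inv_mem' {a} (ha : a.left ^ p = 1) :=
    show a⁻¹.left ^ p = 1 by rw [inv_left, ← map_pow, inv_pow, ha, inv_one, map_one]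

variable {p φ}

@[simp]
lemma mem_omegaOne {g : P ⋊[φ] H} : g ∈ omegaOne p φ ↔ g.left ^ p = 1 := Iff.rfl

lemma isConj_of_inl_mul_mul_inv_inl [Finite P] [Finite H]
    (hPH : (Nat.card P).Coprime (Nat.card H)) {a b : omegaOne p φ} {y : P}
    (hab : (inl y : P ⋊[φ] H) * a * (inl y : P ⋊[φ] H)⁻¹ = b) : IsConj a b := by
  set σ := φ (a : P ⋊[φ] H).right
  have hb : (b : P ⋊[φ] H) = ⟨a.1.left * (y * (σ y)⁻¹), a.1.right⟩ := by
    rw [← hab, inl_mul_mul_inv_inl, map_inv]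
    congr 1
    ac_rfl
  have hy : σ (y ^ p) = y ^ p := by
    have hbp := b.2
    rw [hb, mem_omegaOne, mul_pow, a.2, one_mul, mul_pow, inv_pow, mul_inv_eq_one,
      ← map_pow] at hbp
    exact hbp.symm
  obtain ⟨v, hvp, hv⟩ := exists_pow_eq_one_mul_inv_map_eq (n := Nat.card H)
    (by rw [← map_pow, pow_card_eq_one', map_one]) hPH hy
  refine isConj_iff.mpr ⟨⟨inl v, by simpa using hvp⟩, Subtype.ext ?_⟩
  rw [Subgroup.coe_mul, Subgroup.coe_mul, Subgroup.coe_inv, inl_mul_mul_inv_inl, hb, ← hv,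
    map_inv]
  congr 1
  ac_rfl

lemma isConj_of_isConj_coe_omegaOne [Finite P] [Finite H]
    (hPH : (Nat.card P).Coprime (Nat.card H)) {a b : omegaOne p φ}
    (h : IsConj (a : P ⋊[φ] H) b) : IsConj a b := by
  obtain ⟨c, hc⟩ := isConj_iff.mp h
  set k : omegaOne p φ := ⟨inr c.right, by simp⟩
  refine (isConj_iff.mpr ⟨k, rfl⟩).trans (isConj_of_inl_mul_mul_inv_inl hPH (y := c.left) ?_)
  rw [← hc]
  conv_rhs => rw [← inl_left_mul_inr_right c]
  simp only [k, Subgroup.coe_mul, Subgroup.coe_inv]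
  group

lemma injective_conjClassesMap_omegaOne [Finite P] [Finite H]
    (hPH : (Nat.card P).Coprime (Nat.card H)) :
    Function.Injective (ConjClasses.map (omegaOne p φ).subtype) := by
  rintro ⟨a⟩ ⟨b⟩ h
  exact ConjClasses.mk_eq_mk_iff_isConj.mpr
    (isConj_of_isConj_coe_omegaOne hPH (ConjClasses.mk_eq_mk_iff_isConj.mp h))

lemma not_sq_dvd_orderOf_of_mem_omegaOne [Finite H] (hp : p.Prime)
    (hH : (Nat.card H).Coprime p) {g : P ⋊[φ] H} (hg : g ∈ omegaOne p φ) :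
    ¬ p ^ 2 ∣ orderOf g := by
  set n := Nat.card H
  have hgn : g ^ n = inl (g ^ n).left := by
    ext
    · rfl
    · rw [right_inl, ← rightHom_eq_right, map_pow, pow_card_eq_one']
  have hord : orderOf g ∣ n * p := by
    rw [orderOf_dvd_iff_pow_eq_one, pow_mul, hgn, ← map_pow, mem_omegaOne.mp (pow_mem hg n),
      map_one]
  intro hsq
  have hpn : p ∣ n := Nat.dvd_of_mul_dvd_mul_right hp.pos (sq p ▸ hsq.trans hord)
  exact hp.one_lt.ne' (hH.symm.eq_one_of_dvd hpn)

end OmegaOne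

section Orbits

open MulAction

variable {P H : Type*} [CommGroup P] [Group H] {p : ℕ} {φ : H →* MulAut P} [MulAction H P]

def orbitConjClass (hφ : ∀ (k : H) (x : P), k • x = φ k x) :
    orbitRel.Quotient H P → ConjClasses (P ⋊[φ] H) :=
  Quotient.lift (fun x => ConjClasses.mk (inl x)) fun _ _ ⟨k, hk⟩ =>
    ConjClasses.mk_eq_mk_iff_isConj.mpr (isConj_inl_iff.mpr ⟨k, (hφ k _).symm.trans hk⟩).symm

lemma orbitConjClass_injective (hφ : ∀ (k : H) (x : P), k • x = φ k x) :
    Function.Injective (orbitConjClass hφ) := by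
  rintro ⟨x⟩ ⟨y⟩ h
  obtain ⟨k, hk⟩ := isConj_inl_iff.mp (ConjClasses.mk_eq_mk_iff_isConj.mp h)
  exact (Quotient.sound (orbitRel_apply.mpr ⟨k, (hφ k x).trans hk⟩)).symm

lemma orderOf_eq_of_mk_eq (hφ : ∀ (k : H) (x : P), k • x = φ k x) {x y : P}
    (h : (Quotient.mk'' x : orbitRel.Quotient H P) = Quotient.mk'' y) :
    orderOf x = orderOf y := by
  obtain ⟨k, rfl⟩ := Quotient.exact' h
  rw [show (fun m : H => m • y) k = φ k y from hφ k y, MulEquiv.orderOf_eq]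

theorem sum_card_orbits_add_card_conjClasses_omegaOne_le [Finite P] [Finite H]
    (hp : p.Prime) (hP : IsPGroup p P) (hH : (Nat.card H).Coprime p)
    (hφ : ∀ (k : H) (x : P), k • x = φ k x) (s : Finset ℕ) (hs : ∀ a ∈ s, 2 ≤ a) :
    ∑ a ∈ s, Nat.card {ω : orbitRel.Quotient H P //
        ∃ x : P, orderOf x = p ^ a ∧ Quotient.mk'' x = ω} +
      Nat.card (ConjClasses (omegaOne p φ)) ≤ Nat.card (ConjClasses (P ⋊[φ] H)) := by
  set Q := fun a : ℕ =>
    {ω : orbitRel.Quotient H P // ∃ x : P, orderOf x = p ^ a ∧ Quotient.mk'' x = ω}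
  have hPH : (Nat.card P).Coprime (Nat.card H) := by
    obtain ⟨k, hk⟩ := hP.exists_card_dvd_pow
    exact (hH.symm.pow_left k).coprime_dvd_left hk
  have hsigma : Function.Injective fun d : (Σ a : s, Q a) => d.2.1 := by
    rintro ⟨a, _, x, hx, rfl⟩ ⟨b, _, y, hy, rfl⟩ h
    obtain rfl : a = b := Subtype.ext <| Nat.pow_right_injective hp.two_le <| by
      simp only [← hx, ← hy, orderOf_eq_of_mk_eq hφ h]
    exact Sigma.ext rfl (heq_of_eq (Subtype.ext h))
  have hdisj : ∀ (d : Σ a : s, Q a) (c : ConjClasses (omegaOne p φ)),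
      orbitConjClass hφ d.2.1 ≠ ConjClasses.map (omegaOne p φ).subtype c := by
    rintro ⟨a, _, x, hx, rfl⟩ ⟨w⟩ h
    change ConjClasses.mk (inl x) = ConjClasses.mk (w : P ⋊[φ] H) at h
    have hw : orderOf (w : P ⋊[φ] H) = p ^ (a : ℕ) := by
      rw [← (ConjClasses.mk_eq_mk_iff_isConj.mp h).orderOf_eq,
        orderOf_injective _ inl_injective, hx]
    exact not_sq_dvd_orderOf_of_mem_omegaOne hp hH w.2 (hw ▸ pow_dvd_pow p (hs a a.2))
  calc _ = Nat.card ((Σ a : s, Q a) ⊕ ConjClasses (omegaOne p φ)) := by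
        rw [Nat.card_sum, Nat.card_sigma, Finset.sum_coe_sort s fun a => Nat.card (Q a)]
    _ ≤ _ := Nat.card_le_card_of_injective _
        (((orbitConjClass_injective hφ).comp hsigma).sumElim
          (injective_conjClassesMap_omegaOne hPH) hdisj)

end Orbits

theorem stmt_14_general (p : ℕ) (hp : p.Prime)
    (P : Type*) [CommGroup P] [Fintype P] (hP : IsPGroup p P)
    (H : Type*) [Group H] [Fintype H] (hH : Nat.Coprime (Nat.card H) p)
    (φ : H →* MulAut P)
    (horb : ∀ a : ℕ, 2 ≤ a → p ^ a ∣ Monoid.exponent P →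
      (letI : MulAction H P := MulAction.compHom P φ
       p ^ (a - 1) ≤ Nat.card {ω : MulAction.orbitRel.Quotient H P //
        ∃ x : P, orderOf x = p ^ a ∧ Quotient.mk'' x = ω})) :
    (Monoid.exponent P - 1) / (p - 1) - 1 +
      Nat.card (ConjClasses ↥(Subgroup.closure {g : P ⋊[φ] H | g.left ^ p = 1})) ≤
    Nat.card (ConjClasses (P ⋊[φ] H)) := by
  let : MulAction H P := MulAction.compHom P φ
  have : Fact p.Prime := ⟨hp⟩
  obtain ⟨e, he⟩ := hP.exists_exponent_eq_pow
  have hclosure : Subgroup.closure {g : P ⋊[φ] H | g.left ^ p = 1} = omegaOne p φ :=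
    Subgroup.closure_eq (omegaOne p φ)
  rw [hclosure, he, ← Nat.geomSum_eq hp.two_le, Nat.sum_range_pow_sub_one_eq_sum_Icc]
  refine le_trans (Nat.add_le_add_right (Finset.sum_le_sum fun a ha => ?_) _)
    (sum_card_orbits_add_card_conjClasses_omegaOne_le hp hP hH (fun _ _ => rfl) _
      fun a ha => (Finset.mem_Icc.mp ha).1)
  obtain ⟨ha2, hae⟩ := Finset.mem_Icc.mp ha
  exact horb a ha2 (he ▸ pow_dvd_pow p hae)

theorem stmt_14 (p : ℕ) (hp : p.Prime)
    (P : Type*) [CommGroup P] [Fintype P] (hP : IsPGroup p P)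
    (H : Type*) [Group H] [Fintype H] (hH : Nat.Coprime (Nat.card H) p)
    (φ : H →* MulAut P) (hfaithful : Function.Injective φ)
    (horb : ∀ a : ℕ, 2 ≤ a → p ^ a ∣ Monoid.exponent P →
      (letI : MulAction H P := MulAction.compHom P φ
       p ^ (a - 1) ≤ Nat.card {ω : MulAction.orbitRel.Quotient H P //
        ∃ x : P, orderOf x = p ^ a ∧ Quotient.mk'' x = ω})) :
    (Monoid.exponent P - 1) / (p - 1) - 1 +
      Nat.card (ConjClasses ↥(Subgroup.closure {g : P ⋊[φ] H | g.left ^ p = 1})) ≤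
    Nat.card (ConjClasses (P ⋊[φ] H)) :=
  stmt_14_general p hp P hP H hH φ horb
end
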